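/- arXiv:2401.03029 — 8 statements merged into one kernel-verified Lean document; each statement's English description precedes it below -/
import Mathlib

section
/- Let U ⊆ ℝ² be open and let p₁,p₂,q₁,q₂,k₁,k₂,K : U → ℝ be smooth functions satisfying Cartan's structure equations: ∂ₓp₂ - ∂ᵧp₁ = -(k₁q₂ - k₂q₁), ∂ₓq₂ - ∂ᵧq₁ = k₁p₂ - k₂p₁, and ∂ₓk₂ - ∂ᵧk₁ = K·(p₁q₂ - p₂q₁), and suppose the coframe condition p₁q₂ - p₂q₁ ≠ 0 holds everywhere on U. Define the 2×2-matrix-valued functions A₁ = ½·[[q₁, p₁-k₁],[p₁+k₁, -q₁]] and A₂ = ½·[[q₂, p₂-k₂],[p₂+k₂, -q₂]]. Then (A₁,A₂) satisfies the zero-curvature equation on U if and only if K(x,y) = -1 for all (x,y) ∈ U. -/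
open Matrix

/-- Partial derivative in the `x`-direction of a function on `ℝ²`. -/
noncomputable def pdx (f : ℝ × ℝ → ℝ) (z : ℝ × ℝ) : ℝ := fderiv ℝ f z (1, 0)

/-- Partial derivative in the `y`-direction of a function on `ℝ²`. -/
noncomputable def pdy (f : ℝ × ℝ → ℝ) (z : ℝ × ℝ) : ℝ := fderiv ℝ f z (0, 1)

/-- Entrywise partial derivative in the `x`-direction of a matrix-valued function on `ℝ²`. -/
noncomputable def pdxM (A : ℝ × ℝ → Matrix (Fin 2) (Fin 2) ℝ) (z : ℝ × ℝ) :
    Matrix (Fin 2) (Fin 2) ℝ := Matrix.of fun i j => pdx (fun w => A w i j) z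

/-- Entrywise partial derivative in the `y`-direction of a matrix-valued function on `ℝ²`. -/
noncomputable def pdyM (A : ℝ × ℝ → Matrix (Fin 2) (Fin 2) ℝ) (z : ℝ × ℝ) :
    Matrix (Fin 2) (Fin 2) ℝ := Matrix.of fun i j => pdy (fun w => A w i j) z

/-- The zero-curvature (flatness) equation for the connection 1-form `A = A₁ dx + A₂ dy`,
required to hold at every point of `U`. -/
noncomputable def ZeroCurvatureOn (A₁ A₂ : ℝ × ℝ → Matrix (Fin 2) (Fin 2) ℝ)
    (U : Set (ℝ × ℝ)) : Prop :=
  ∀ z ∈ U, pdxM A₂ z - pdyM A₁ z + A₁ z * A₂ z - A₂ z * A₁ z = 0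

/-!
Write `A = ½ (α₂ H + α₁ X + κ J)` in the basis `H = !![1,0;0,-1]`, `X = !![0,1;1,0]`,
`J = !![0,-1;1,0]` of `sl(2,ℝ)`. Since `[H,X] = -2J`, `[H,J] = -2X`, `[X,J] = 2H`, both `dA` and
`[A₁, A₂]` are again of this form, and the first two structure equations cancel their `X` and
`H` components. What is left is `F = ½ (K + 1)(p₁q₂ - p₂q₁) J`, which vanishes exactly when
`K = -1` because the coframe is nondegenerate.
-/

/-- The matrix `½ (q H + p X + k J)`. -/
noncomputable def connMatrix (p q k : ℝ) : Matrix (Fin 2) (Fin 2) ℝ :=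
  (1/2 : ℝ) • !![q, p - k; p + k, -q]

lemma connMatrix_add (p q k p' q' k' : ℝ) :
    connMatrix p q k + connMatrix p' q' k' = connMatrix (p + p') (q + q') (k + k') := by
  ext i j
  fin_cases i <;> fin_cases j <;>
    simp only [connMatrix, Matrix.add_apply, Matrix.smul_apply, of_apply, cons_val', cons_val_zero,
      cons_val_one, cons_val_fin_one, smul_eq_mul, Fin.isValue, Fin.zero_eta, Fin.mk_one] <;> ring

lemma connMatrix_sub (p q k p' q' k' : ℝ) :
    connMatrix p q k - connMatrix p' q' k' = connMatrix (p - p') (q - q') (k - k') := by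
  ext i j
  fin_cases i <;> fin_cases j <;>
    simp only [connMatrix, Matrix.sub_apply, Matrix.smul_apply, of_apply, cons_val', cons_val_zero,
      cons_val_one, cons_val_fin_one, smul_eq_mul, Fin.isValue, Fin.zero_eta, Fin.mk_one] <;> ring

lemma connMatrix_mul_sub_mul (p q k p' q' k' : ℝ) :
    connMatrix p q k * connMatrix p' q' k' - connMatrix p' q' k' * connMatrix p q k =
      connMatrix (k * q' - k' * q) (p * k' - p' * k) (p * q' - p' * q) := by
  ext i j
  fin_cases i <;> fin_cases j <;>
    simp only [connMatrix, Matrix.sub_apply, Matrix.mul_apply, Fin.sum_univ_two, Matrix.smul_apply,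
      of_apply, cons_val', cons_val_zero, cons_val_one, cons_val_fin_one, smul_eq_mul, Fin.isValue,
      Fin.zero_eta, Fin.mk_one] <;> ring

lemma connMatrix_zero_zero_eq_zero_iff (k : ℝ) : connMatrix 0 0 k = 0 ↔ k = 0 := by
  constructor
  · intro h
    simpa [connMatrix] using congrFun (congrFun h 1) 0
  · rintro rfl
    ext i j
    fin_cases i <;> fin_cases j <;> simp [connMatrix]

lemma fderiv_connMatrix_apply {p q k : ℝ × ℝ → ℝ} {z : ℝ × ℝ} (v : ℝ × ℝ)
    (hp : DifferentiableAt ℝ p z) (hq : DifferentiableAt ℝ q z) (hk : DifferentiableAt ℝ k z) :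
    Matrix.of (fun i j => fderiv ℝ (fun w => connMatrix (p w) (q w) (k w) i j) z v) =
      connMatrix (fderiv ℝ p z v) (fderiv ℝ q z v) (fderiv ℝ k z v) := by
  ext i j
  fin_cases i <;> fin_cases j <;>
    simp [connMatrix, fderiv_const_mul, fderiv_fun_sub, fderiv_fun_add, fderiv_fun_neg, hp, hq, hk,
      mul_add, mul_sub]

lemma pdxM_connMatrix {p q k : ℝ × ℝ → ℝ} {z : ℝ × ℝ}
    (hp : DifferentiableAt ℝ p z) (hq : DifferentiableAt ℝ q z) (hk : DifferentiableAt ℝ k z) :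
    pdxM (fun w => connMatrix (p w) (q w) (k w)) z = connMatrix (pdx p z) (pdx q z) (pdx k z) :=
  fderiv_connMatrix_apply _ hp hq hk

lemma pdyM_connMatrix {p q k : ℝ × ℝ → ℝ} {z : ℝ × ℝ}
    (hp : DifferentiableAt ℝ p z) (hq : DifferentiableAt ℝ q z) (hk : DifferentiableAt ℝ k z) :
    pdyM (fun w => connMatrix (p w) (q w) (k w)) z = connMatrix (pdy p z) (pdy q z) (pdy k z) :=
  fderiv_connMatrix_apply _ hp hq hk

theorem zero_curvature_iff_gauss_curvature_neg_one_general
    (U : Set (ℝ × ℝ)) (hU : IsOpen U)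
    (p₁ p₂ q₁ q₂ k₁ k₂ K : ℝ × ℝ → ℝ)
    (hp₁ : ContDiffOn ℝ (⊤ : ℕ∞) p₁ U) (hp₂ : ContDiffOn ℝ (⊤ : ℕ∞) p₂ U)
    (hq₁ : ContDiffOn ℝ (⊤ : ℕ∞) q₁ U) (hq₂ : ContDiffOn ℝ (⊤ : ℕ∞) q₂ U)
    (hk₁ : ContDiffOn ℝ (⊤ : ℕ∞) k₁ U) (hk₂ : ContDiffOn ℝ (⊤ : ℕ∞) k₂ U)
    (hstruct₁ : ∀ z ∈ U, pdx p₂ z - pdy p₁ z = -(k₁ z * q₂ z - k₂ z * q₁ z))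
    (hstruct₂ : ∀ z ∈ U, pdx q₂ z - pdy q₁ z = k₁ z * p₂ z - k₂ z * p₁ z)
    (hstruct₃ : ∀ z ∈ U, pdx k₂ z - pdy k₁ z = K z * (p₁ z * q₂ z - p₂ z * q₁ z))
    (hcoframe : ∀ z ∈ U, p₁ z * q₂ z - p₂ z * q₁ z ≠ 0)
    (A₁ A₂ : ℝ × ℝ → Matrix (Fin 2) (Fin 2) ℝ)
    (hA₁ : A₁ = fun z => (1/2 : ℝ) •
      !![q₁ z, p₁ z - k₁ z; p₁ z + k₁ z, -q₁ z])
    (hA₂ : A₂ = fun z => (1/2 : ℝ) •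
      !![q₂ z, p₂ z - k₂ z; p₂ z + k₂ z, -q₂ z]) :
    ZeroCurvatureOn A₁ A₂ U ↔ ∀ z ∈ U, K z = -1 := by
  have curvature_eq : ∀ z ∈ U, pdxM A₂ z - pdyM A₁ z + A₁ z * A₂ z - A₂ z * A₁ z =
      connMatrix 0 0 ((K z + 1) * (p₁ z * q₂ z - p₂ z * q₁ z)) := by
    intro z hz
    have diff {f : ℝ × ℝ → ℝ} (hf : ContDiffOn ℝ (⊤ : ℕ∞) f U) : DifferentiableAt ℝ f z :=
      (hf.differentiableOn (by simp)).differentiableAt (hU.mem_nhds hz)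
    obtain rfl : A₁ = fun w => connMatrix (p₁ w) (q₁ w) (k₁ w) := hA₁
    obtain rfl : A₂ = fun w => connMatrix (p₂ w) (q₂ w) (k₂ w) := hA₂
    rw [add_sub_assoc, connMatrix_mul_sub_mul, pdxM_connMatrix (diff hp₂) (diff hq₂) (diff hk₂),
      pdyM_connMatrix (diff hp₁) (diff hq₁) (diff hk₁), connMatrix_sub, connMatrix_add,
      hstruct₁ z hz, hstruct₂ z hz, hstruct₃ z hz]
    congr 1 <;> ring
  refine forall₂_congr fun z hz => ?_
  rw [curvature_eq z hz, connMatrix_zero_zero_eq_zero_iff, mul_eq_zero, or_iff_left (hcoframe z hz),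
    add_eq_zero_iff_eq_neg]

/-- A hyperbolic 0-metric corresponds to a flat `sl(2,ℝ)`-connection: the connection 1-form
built from an orthonormal coframe `α₁ = p₁dx + p₂dy, α₂ = q₁dx + q₂dy` and its spin connection
`κ = k₁dx + k₂dy` satisfying Cartan's structure equations is flat on `U` iff the Gauss
curvature `K` equals `-1` on `U`. -/
theorem zero_curvature_iff_gauss_curvature_neg_one
    (U : Set (ℝ × ℝ)) (hU : IsOpen U)
    (p₁ p₂ q₁ q₂ k₁ k₂ K : ℝ × ℝ → ℝ)
    (hp₁ : ContDiffOn ℝ (⊤ : ℕ∞) p₁ U) (hp₂ : ContDiffOn ℝ (⊤ : ℕ∞) p₂ U)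
    (hq₁ : ContDiffOn ℝ (⊤ : ℕ∞) q₁ U) (hq₂ : ContDiffOn ℝ (⊤ : ℕ∞) q₂ U)
    (hk₁ : ContDiffOn ℝ (⊤ : ℕ∞) k₁ U) (hk₂ : ContDiffOn ℝ (⊤ : ℕ∞) k₂ U)
    (hK : ContDiffOn ℝ (⊤ : ℕ∞) K U)
    (hstruct₁ : ∀ z ∈ U, pdx p₂ z - pdy p₁ z = -(k₁ z * q₂ z - k₂ z * q₁ z))
    (hstruct₂ : ∀ z ∈ U, pdx q₂ z - pdy q₁ z = k₁ z * p₂ z - k₂ z * p₁ z)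
    (hstruct₃ : ∀ z ∈ U, pdx k₂ z - pdy k₁ z = K z * (p₁ z * q₂ z - p₂ z * q₁ z))
    (hcoframe : ∀ z ∈ U, p₁ z * q₂ z - p₂ z * q₁ z ≠ 0)
    (A₁ A₂ : ℝ × ℝ → Matrix (Fin 2) (Fin 2) ℝ)
    (hA₁ : A₁ = fun z => (1/2 : ℝ) •
      !![q₁ z, p₁ z - k₁ z; p₁ z + k₁ z, -q₁ z])
    (hA₂ : A₂ = fun z => (1/2 : ℝ) •
      !![q₂ z, p₂ z - k₂ z; p₂ z + k₂ z, -q₂ z]) :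
    ZeroCurvatureOn A₁ A₂ U ↔ ∀ z ∈ U, K z = -1 :=
  zero_curvature_iff_gauss_curvature_neg_one_general U hU p₁ p₂ q₁ q₂ k₁ k₂ K hp₁ hp₂ hq₁ hq₂ hk₁
    hk₂ hstruct₁ hstruct₂ hstruct₃ hcoframe A₁ A₂ hA₁ hA₂
end

section
/- Let T : ℝ → ℝ be a smooth function. On the open set {(x,y) ∈ ℝ² : y ≠ 0}, define the 2×2-matrix-valued functions A₁(x,y) = [[0, 1/y],[-T(x)·y, 0]] and A₂(x,y) = [[1/(2y), 0],[0, -1/(2y)]]. Then (A₁,A₂) satisfies the zero-curvature equation: ∂ₓA₂ - ∂ᵧA₁ + A₁A₂ - A₂A₁ = 0. -/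
/-!
`A₂` depends on `y` alone, so `∂ₓA₂ = 0`, while `∂ᵧA₁ = [[0, -1/y²], [-T(x), 0]]` is exactly
the commutator `A₁A₂ - A₂A₁`.
-/

open Matrix

/-- No differentiability is needed: where `fderiv` does not exist it is `0`. -/
theorem pdx_comp_snd (g : ℝ → ℝ) (z : ℝ × ℝ) : pdx (fun w => g w.2) z = 0 := by
  by_cases hg : DifferentiableAt ℝ (fun w : ℝ × ℝ => g w.2) z
  · simp [pdx, ← hg.lineDeriv_eq_fderiv, lineDeriv]
  · simp [pdx, fderiv_zero_of_not_differentiableAt hg]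

theorem pdxM_comp_snd (B : ℝ → Matrix (Fin 2) (Fin 2) ℝ) (z : ℝ × ℝ) :
    pdxM (fun w => B w.2) z = 0 := by
  ext i j
  exact pdx_comp_snd (fun y => B y i j) z

theorem pdy_eq_deriv {f : ℝ × ℝ → ℝ} {z : ℝ × ℝ} (hf : DifferentiableAt ℝ f z) :
    pdy f z = deriv (fun t => f (z.1, t)) z.2 := by
  have hline : HasDerivAt (fun t : ℝ => (z.1, t)) (0, 1) z.2 :=
    (hasDerivAt_const _ _).prodMk (hasDerivAt_id _)
  rw [pdy, ← hline.deriv, ← fderiv_comp_deriv _ hf hline.differentiableAt]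
  rfl

theorem pdy_one_div_snd {z : ℝ × ℝ} (hz : z.2 ≠ 0) :
    pdy (fun w => 1 / w.2) z = -(1 / z.2 ^ 2) := by
  rw [pdy_eq_deriv (by fun_prop (disch := exact hz))]
  simp [one_div]

theorem pdy_mul_snd {f : ℝ → ℝ} {z : ℝ × ℝ} (hf : DifferentiableAt ℝ f z.1) :
    pdy (fun w => f w.1 * w.2) z = f z.1 := by
  rw [pdy_eq_deriv (by fun_prop)]
  simp

/-- The connection 1-form in the Fefferman–Graham gauge,
`A₁ = [[0, 1/y],[-T(x)·y, 0]]`, `A₂ = [[1/(2y), 0],[0, -1/(2y)]]`, is flat on `{y ≠ 0}`. -/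
theorem feffermanGraham_zero_curvature
    (T : ℝ → ℝ) (hT : ContDiff ℝ (⊤ : ℕ∞) T)
    (A₁ A₂ : ℝ × ℝ → Matrix (Fin 2) (Fin 2) ℝ)
    (hA₁ : A₁ = fun z => !![0, 1 / z.2; -T z.1 * z.2, 0])
    (hA₂ : A₂ = fun z => !![1 / (2 * z.2), 0; 0, -(1 / (2 * z.2))]) :
    ∀ z : ℝ × ℝ, z.2 ≠ 0 →
      pdxM A₂ z - pdyM A₁ z + A₁ z * A₂ z - A₂ z * A₁ z = 0 := by
  intro z hz
  have hX : pdxM A₂ z = 0 :=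
    hA₂ ▸ pdxM_comp_snd (fun y => !![1 / (2 * y), 0; 0, -(1 / (2 * y))]) z
  have hY : pdyM A₁ z = !![0, -(1 / z.2 ^ 2); -T z.1, 0] := by
    subst hA₁
    ext i j
    fin_cases i <;> fin_cases j
    · simp [pdyM, pdy]
    · exact pdy_one_div_snd hz
    · exact pdy_mul_snd (f := fun x => -T x) (hT.differentiable (by simp) _).neg
    · simp [pdyM, pdy]
  rw [hX, hY, hA₁, hA₂]
  ext i j
  fin_cases i <;> fin_cases j <;> simp <;> field_simp <;> ring
end

section
/- Let U ⊆ ℝ² be open, let p₁,p₂,q₁,q₂,k₁,k₂ : U → ℝ and φ : U → ℝ be smooth. Define the rotated components p'ᵢ = cos(φ)·pᵢ + sin(φ)·qᵢ, q'ᵢ = -sin(φ)·pᵢ + cos(φ)·qᵢ, and k'ᵢ = kᵢ - ∂ᵢφ (i = 1,2, where ∂₁ = ∂ₓ, ∂₂ = ∂ᵧ). Set Aᵢ = ½·[[qᵢ, pᵢ-kᵢ],[pᵢ+kᵢ, -qᵢ]] and A'ᵢ = ½·[[q'ᵢ, p'ᵢ-k'ᵢ],[p'ᵢ+k'ᵢ,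 -q'ᵢ]], and let R(θ) = [[cos θ, -sin θ],[sin θ, cos θ]]. Then for i = 1,2: A'ᵢ = R(φ/2)·Aᵢ·R(φ/2)⁻¹ - ∂ᵢ(R(φ/2))·R(φ/2)⁻¹. -/
/-!
Write `A = ½ (q σ₃ + p σ₁ + k J)` with `J = R (π / 2)`. Conjugation by `R θ` commutes with `J` and
rotates the symmetric traceless part `(p, q)` by `2θ`, which is why the half angle `φ / 2` appears.
Since `∂ R(θ) = ∂θ • R (θ + π / 2)`, the gauge term `(∂ R(φ/2)) R(φ/2)⁻¹` equals `(∂φ / 2) • J`,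
which shifts `k` to `k - ∂φ`.
-/

open Matrix

noncomputable def R (θ : ℝ) : Matrix (Fin 2) (Fin 2) ℝ :=
  !![Real.cos θ, -Real.sin θ; Real.sin θ, Real.cos θ]

open Real

noncomputable def connectionMatrix (p q k : ℝ) : Matrix (Fin 2) (Fin 2) ℝ :=
  (1 / 2 : ℝ) • !![q, p - k; p + k, -q]

theorem R_add (a b : ℝ) : R (a + b) = R a * R b := by
  ext i j
  fin_cases i <;> fin_cases j <;> simp [R, cos_add, sin_add] <;> ring

theorem R_zero : R 0 = 1 := by
  simp [R, one_fin_two]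

theorem R_inv (θ : ℝ) : (R θ)⁻¹ = R (-θ) :=
  inv_eq_right_inv (by rw [← R_add, add_neg_cancel, R_zero])

theorem R_mul_connectionMatrix_mul_R_neg (θ p q k : ℝ) :
    R θ * connectionMatrix p q k * R (-θ) =
      connectionMatrix (cos (2 * θ) * p + sin (2 * θ) * q)
        (-sin (2 * θ) * p + cos (2 * θ) * q) k := by
  have hpyth := sin_sq_add_cos_sq θ
  -- only the off-diagonal `k`-entries, which commute with `R θ`, need `sin² + cos² = 1`
  ext i j
  fin_cases i <;> fin_cases j <;>
    simp [R, connectionMatrix, cos_two_mul', sin_two_mul] <;>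
    first
      | ring1
      | linear_combination (k / 2) * hpyth
      | linear_combination (-k / 2) * hpyth

theorem connectionMatrix_sub_smul_R_pi_div_two (p q k d : ℝ) :
    connectionMatrix p q k - (d / 2) • R (π / 2) = connectionMatrix p q (k - d) := by
  ext i j
  fin_cases i <;> fin_cases j <;> simp [R, connectionMatrix] <;> ring

theorem of_fderiv_R_comp {E : Type*} [NormedAddCommGroup E] [NormedSpace ℝ E] {f : E → ℝ}
    {z : E} (hf : DifferentiableAt ℝ f z) (v : E) :
    Matrix.of (fun i j => fderiv ℝ (fun w => R (f w) i j) z v) =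
      fderiv ℝ f z v • R (f z + π / 2) := by
  ext i j
  fin_cases i <;> fin_cases j <;>
    simp [R, cos_add_pi_div_two, sin_add_pi_div_two, fderiv_cos hf, fderiv_sin hf] <;> ring

theorem of_fderiv_R_half_comp {E : Type*} [NormedAddCommGroup E] [NormedSpace ℝ E]
    {φ : E → ℝ} {z : E} (hφ : DifferentiableAt ℝ φ z) (v : E) :
    Matrix.of (fun i j => fderiv ℝ (fun w => R (φ w / 2) i j) z v) =
      (fderiv ℝ φ z v / 2) • R (φ z / 2 + π / 2) := by
  rw [of_fderiv_R_comp (f := fun w => φ w / 2) (by fun_prop) v]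
  simp [div_eq_mul_inv, fderiv_mul_const hφ, mul_comm]

theorem pdxM_R_half {φ : ℝ × ℝ → ℝ} {z : ℝ × ℝ} (hφ : DifferentiableAt ℝ φ z) :
    pdxM (fun w => R (φ w / 2)) z = (pdx φ z / 2) • R (φ z / 2 + π / 2) :=
  of_fderiv_R_half_comp hφ (1, 0)

theorem pdyM_R_half {φ : ℝ × ℝ → ℝ} {z : ℝ × ℝ} (hφ : DifferentiableAt ℝ φ z) :
    pdyM (fun w => R (φ w / 2)) z = (pdy φ z / 2) • R (φ z / 2 + π / 2) :=
  of_fderiv_R_half_comp hφ (0, 1)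

theorem R_half_gauge_connectionMatrix (φ d p q k : ℝ) :
    R (φ / 2) * connectionMatrix p q k * (R (φ / 2))⁻¹
        - (d / 2) • R (φ / 2 + π / 2) * (R (φ / 2))⁻¹ =
      connectionMatrix (cos φ * p + sin φ * q) (-sin φ * p + cos φ * q) (k - d) := by
  rw [R_inv, R_mul_connectionMatrix_mul_R_neg, smul_mul_assoc, ← R_add,
    add_neg_cancel_comm, mul_div_cancel₀ φ two_ne_zero, connectionMatrix_sub_smul_R_pi_div_two]

theorem coframe_rotation_gauge_transformation_general
    (U : Set (ℝ × ℝ)) (hU : IsOpen U)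
    (p₁ p₂ q₁ q₂ k₁ k₂ φ : ℝ × ℝ → ℝ)
    (hφ : ContDiffOn ℝ (⊤ : ℕ∞) φ U)
    (p₁' p₂' q₁' q₂' k₁' k₂' : ℝ × ℝ → ℝ)
    (hp₁' : p₁' = fun z => Real.cos (φ z) * p₁ z + Real.sin (φ z) * q₁ z)
    (hp₂' : p₂' = fun z => Real.cos (φ z) * p₂ z + Real.sin (φ z) * q₂ z)
    (hq₁' : q₁' = fun z => -Real.sin (φ z) * p₁ z + Real.cos (φ z) * q₁ z)
    (hq₂' : q₂' = fun z => -Real.sin (φ z) * p₂ z + Real.cos (φ z) * q₂ z)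
    (hk₁' : k₁' = fun z => k₁ z - pdx φ z)
    (hk₂' : k₂' = fun z => k₂ z - pdy φ z)
    (A₁ A₂ A₁' A₂' : ℝ × ℝ → Matrix (Fin 2) (Fin 2) ℝ)
    (hA₁ : A₁ = fun z => (1/2 : ℝ) • !![q₁ z, p₁ z - k₁ z; p₁ z + k₁ z, -q₁ z])
    (hA₂ : A₂ = fun z => (1/2 : ℝ) • !![q₂ z, p₂ z - k₂ z; p₂ z + k₂ z, -q₂ z])
    (hA₁' : A₁' = fun z => (1/2 : ℝ) • !![q₁' z, p₁' z - k₁' z; p₁' z + k₁' z, -q₁' z])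
    (hA₂' : A₂' = fun z => (1/2 : ℝ) • !![q₂' z, p₂' z - k₂' z; p₂' z + k₂' z, -q₂' z]) :
    ∀ z ∈ U,
      A₁' z = R (φ z / 2) * A₁ z * (R (φ z / 2))⁻¹
        - pdxM (fun w => R (φ w / 2)) z * (R (φ z / 2))⁻¹ ∧
      A₂' z = R (φ z / 2) * A₂ z * (R (φ z / 2))⁻¹
        - pdyM (fun w => R (φ w / 2)) z * (R (φ z / 2))⁻¹ := by
  intro z hz
  have hdφ : DifferentiableAt ℝ φ z :=
    (hφ.contDiffAt (hU.mem_nhds hz)).differentiableAt (by simp)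
  subst hp₁' hp₂' hq₁' hq₂' hk₁' hk₂' hA₁ hA₂ hA₁' hA₂'
  rw [pdxM_R_half hdφ, pdyM_R_half hdφ]
  exact ⟨(R_half_gauge_connectionMatrix ..).symm, (R_half_gauge_connectionMatrix ..).symm⟩

/-- Under a coframe rotation by angle `φ`, the associated `sl(2,ℝ)`-valued connection 1-form
transforms by the gauge transformation `A' = R(φ/2) • A`, i.e. coframe rotations correspond
to `SO(2)`-valued gauge transformations through half the angle. -/
theorem coframe_rotation_gauge_transformation
    (U : Set (ℝ × ℝ)) (hU : IsOpen U)
    (p₁ p₂ q₁ q₂ k₁ k₂ φ : ℝ × ℝ → ℝ)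
    (hp₁ : ContDiffOn ℝ (⊤ : ℕ∞) p₁ U) (hp₂ : ContDiffOn ℝ (⊤ : ℕ∞) p₂ U)
    (hq₁ : ContDiffOn ℝ (⊤ : ℕ∞) q₁ U) (hq₂ : ContDiffOn ℝ (⊤ : ℕ∞) q₂ U)
    (hk₁ : ContDiffOn ℝ (⊤ : ℕ∞) k₁ U) (hk₂ : ContDiffOn ℝ (⊤ : ℕ∞) k₂ U)
    (hφ : ContDiffOn ℝ (⊤ : ℕ∞) φ U)
    (p₁' p₂' q₁' q₂' k₁' k₂' : ℝ × ℝ → ℝ)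
    (hp₁' : p₁' = fun z => Real.cos (φ z) * p₁ z + Real.sin (φ z) * q₁ z)
    (hp₂' : p₂' = fun z => Real.cos (φ z) * p₂ z + Real.sin (φ z) * q₂ z)
    (hq₁' : q₁' = fun z => -Real.sin (φ z) * p₁ z + Real.cos (φ z) * q₁ z)
    (hq₂' : q₂' = fun z => -Real.sin (φ z) * p₂ z + Real.cos (φ z) * q₂ z)
    (hk₁' : k₁' = fun z => k₁ z - pdx φ z)
    (hk₂' : k₂' = fun z => k₂ z - pdy φ z)
    (A₁ A₂ A₁' A₂' : ℝ × ℝ → Matrix (Fin 2) (Fin 2) ℝ)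
    (hA₁ : A₁ = fun z => (1/2 : ℝ) • !![q₁ z, p₁ z - k₁ z; p₁ z + k₁ z, -q₁ z])
    (hA₂ : A₂ = fun z => (1/2 : ℝ) • !![q₂ z, p₂ z - k₂ z; p₂ z + k₂ z, -q₂ z])
    (hA₁' : A₁' = fun z => (1/2 : ℝ) • !![q₁' z, p₁' z - k₁' z; p₁' z + k₁' z, -q₁' z])
    (hA₂' : A₂' = fun z => (1/2 : ℝ) • !![q₂' z, p₂' z - k₂' z; p₂' z + k₂' z, -q₂' z]) :
    ∀ z ∈ U,
      A₁' z = R (φ z / 2) * A₁ z * (R (φ z / 2))⁻¹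
        - pdxM (fun w => R (φ w / 2)) z * (R (φ z / 2))⁻¹ ∧
      A₂' z = R (φ z / 2) * A₂ z * (R (φ z / 2))⁻¹
        - pdyM (fun w => R (φ w / 2)) z * (R (φ z / 2))⁻¹ :=
  coframe_rotation_gauge_transformation_general U hU p₁ p₂ q₁ q₂ k₁ k₂ φ hφ p₁' p₂' q₁' q₂' k₁' k₂'
    hp₁' hp₂' hq₁' hq₂' hk₁' hk₂' A₁ A₂ A₁' A₂' hA₁ hA₂ hA₁' hA₂'
end

section
/- Let a, s, u : ℝ → ℝ be smooth with a(x) > 0 for all x. Define the sl(2,ℝ)-valued function A(x) = [[s(x)/2, a(x)],[u(x), -s(x)/2]] and the SL(2,ℝ)-valued function h(x) = [[1, 0],[s(x)/2 + a'(x)/(2a(x)), 1]]·[[a(x)^(-1/2), 0],[0, a(x)^(1/2)]]. Then the gauge transform h•A = hAh⁻¹ - h'h⁻¹ equals [[0, 1],[-T(x), 0]], where T = ½·(a''/a - (3/2)·(a'/a)²) - a·u - ¼·s² - ½·(a'/a)·s + ½·s'. -/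
/-!
The gauge action is an action: `(g k)•A = g•(k•A)`, and `h` is the shear
`[[1, 0], [c, 1]]`, `c = s/2 + a'/(2a)`, applied after the rescaling `diag(a^{-1/2}, a^{1/2})`.
The rescaling turns `A` into `[[c, 1], [a u, -c]]`; the shear then kills the diagonal and leaves
`[[0, 1], [a u + c² - c', 0]]`, and `c' - c² - a u` expands to the stated Hill potential `T`.
-/

open Matrix

/-- Entrywise derivative of a matrix-valued function on `ℝ`. -/
noncomputable def derivM (h : ℝ → Matrix (Fin 2) (Fin 2) ℝ) (x : ℝ) :
    Matrix (Fin 2) (Fin 2) ℝ := Matrix.of fun i j => deriv (fun t => h t i j) x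

/-- The gauge transformation `h•A = hAh⁻¹ - h'h⁻¹` of a matrix-valued function `A` by a
`GL(2,ℝ)`-valued function `h`. -/
noncomputable def gaugeTransform (h A : ℝ → Matrix (Fin 2) (Fin 2) ℝ) (x : ℝ) :
    Matrix (Fin 2) (Fin 2) ℝ := h x * A x * (h x)⁻¹ - derivM h x * (h x)⁻¹

theorem derivM_mul {g k : ℝ → Matrix (Fin 2) (Fin 2) ℝ} {x : ℝ}
    (hg : ∀ i j, DifferentiableAt ℝ (fun t => g t i j) x)
    (hk : ∀ i j, DifferentiableAt ℝ (fun t => k t i j) x) :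
    derivM (fun t => g t * k t) x = derivM g x * k x + g x * derivM k x := by
  ext i j
  have hprod := ((hg i 0).hasDerivAt.mul (hk 0 j).hasDerivAt).add
    ((hg i 1).hasDerivAt.mul (hk 1 j).hasDerivAt)
  simp only [derivM, Matrix.mul_apply, Fin.sum_univ_two, Matrix.add_apply, Matrix.of_apply]
  exact hprod.deriv.trans (by ring)

theorem gaugeTransform_mul {g k : ℝ → Matrix (Fin 2) (Fin 2) ℝ} (A : ℝ → Matrix (Fin 2) (Fin 2) ℝ)
    {x : ℝ}
    (hg : ∀ i j, DifferentiableAt ℝ (fun t => g t i j) x)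
    (hk : ∀ i j, DifferentiableAt ℝ (fun t => k t i j) x) (hkx : IsUnit (k x).det) :
    gaugeTransform (fun t => g t * k t) A x = gaugeTransform g (gaugeTransform k A) x := by
  simp only [gaugeTransform, derivM_mul hg hk, Matrix.mul_inv_rev, Matrix.mul_sub, Matrix.sub_mul,
    Matrix.add_mul, Matrix.mul_assoc, Matrix.mul_nonsing_inv_cancel_left _ _ hkx]
  abel

theorem differentiableAt_diagonal_inv_apply {f : ℝ → ℝ} {x : ℝ} (hf : DifferentiableAt ℝ f x)
    (hfx : f x ≠ 0) (i j : Fin 2) :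
    DifferentiableAt ℝ (fun t => !![(f t)⁻¹, 0; 0, f t] i j) x := by
  fin_cases i <;> fin_cases j <;> simp [hf]
  exact hf.inv hfx

theorem derivM_diagonal_inv {f : ℝ → ℝ} {f' x : ℝ} (hf : HasDerivAt f f' x) (hfx : f x ≠ 0) :
    derivM (fun t => !![(f t)⁻¹, 0; 0, f t]) x = !![-f' / f x ^ 2, 0; 0, f'] := by
  ext i j
  fin_cases i <;> fin_cases j <;> simp [derivM, hf.deriv]
  exact (hf.inv hfx).deriv

theorem gaugeTransform_diagonal_inv {f : ℝ → ℝ} {f' x : ℝ} (hf : HasDerivAt f f' x) (hfx : f x ≠ 0)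
    (B : ℝ → Matrix (Fin 2) (Fin 2) ℝ) :
    gaugeTransform (fun t => !![(f t)⁻¹, 0; 0, f t]) B x =
      !![B x 0 0 + f' / f x, B x 0 1 / f x ^ 2; B x 1 0 * f x ^ 2, B x 1 1 - f' / f x] := by
  have hinv : (!![(f x)⁻¹, 0; 0, f x])⁻¹ = !![f x, 0; 0, (f x)⁻¹] := by
    rw [Matrix.inv_def]; simp [Matrix.det_fin_two, Matrix.adjugate_fin_two, hfx]
  rw [gaugeTransform, derivM_diagonal_inv hf hfx, hinv, Matrix.eta_fin_two (B x)]
  ext i j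
  fin_cases i <;> fin_cases j <;> simp <;> field_simp
  ring

theorem differentiableAt_lowerUnitriangular_apply {c : ℝ → ℝ} {x : ℝ} (hc : DifferentiableAt ℝ c x)
    (i j : Fin 2) : DifferentiableAt ℝ (fun t => !![1, 0; c t, 1] i j) x := by
  fin_cases i <;> fin_cases j <;> simp [hc]

theorem derivM_lowerUnitriangular {c : ℝ → ℝ} {c' x : ℝ} (hc : HasDerivAt c c' x) :
    derivM (fun t => !![1, 0; c t, 1]) x = !![0, 0; c', 0] := by
  ext i j
  fin_cases i <;> fin_cases j <;> simp [derivM, hc.deriv]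

theorem gaugeTransform_lowerUnitriangular {c : ℝ → ℝ} {c' x : ℝ} (hc : HasDerivAt c c' x)
    (B : ℝ → Matrix (Fin 2) (Fin 2) ℝ) :
    gaugeTransform (fun t => !![1, 0; c t, 1]) B x =
      !![B x 0 0 - c x * B x 0 1, B x 0 1;
        B x 1 0 + c x * (B x 0 0 - B x 1 1) - c x ^ 2 * B x 0 1 - c', B x 1 1 + c x * B x 0 1] := by
  have hinv : (!![1, 0; c x, 1])⁻¹ = !![1, 0; -c x, 1] := by
    rw [Matrix.inv_def]; simp [Matrix.det_fin_two, Matrix.adjugate_fin_two]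
  rw [gaugeTransform, derivM_lowerUnitriangular hc, hinv, Matrix.eta_fin_two (B x)]
  ext i j
  fin_cases i <;> fin_cases j <;> simp <;> ring

theorem gauge_to_drinfeld_sokolov_general
    (a s u : ℝ → ℝ)
    (ha : ContDiff ℝ (⊤ : ℕ∞) a) (hs : ContDiff ℝ (⊤ : ℕ∞) s)
    (hapos : ∀ x, 0 < a x)
    (A h : ℝ → Matrix (Fin 2) (Fin 2) ℝ)
    (hA : A = fun x => !![s x / 2, a x; u x, -(s x / 2)])
    (hh : h = fun x =>
      !![1, 0; s x / 2 + deriv a x / (2 * a x), 1] *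
      !![(Real.sqrt (a x))⁻¹, 0; 0, Real.sqrt (a x)])
    (T : ℝ → ℝ)
    (hT : T = fun x =>
      (1/2) * (deriv (deriv a) x / a x - (3/2) * (deriv a x / a x) ^ 2)
        - a x * u x - (1/4) * (s x) ^ 2 - (1/2) * (deriv a x / a x) * s x
        + (1/2) * deriv s x) :
    ∀ x, gaugeTransform h A x = !![0, 1; -T x, 0] := by
  intro x
  have hax := hapos x
  have hda : Differentiable ℝ a := ha.differentiable (by simp)
  have hdda : Differentiable ℝ (deriv a) :=
    (contDiff_infty_iff_deriv.mp ha).2.differentiable (by simp)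
  have hsqrt : HasDerivAt (fun t => √(a t)) (deriv a x / (2 * √(a x))) x :=
    (hda x).hasDerivAt.sqrt hax.ne'
  have hc : HasDerivAt (fun t => s t / 2 + deriv a t / (2 * a t))
      (deriv s x / 2 +
        (deriv (deriv a) x * (2 * a x) - deriv a x * (2 * deriv a x)) / (2 * a x) ^ 2) x :=
    ((hs.differentiable (by simp) x).hasDerivAt.div_const 2).add
      ((hdda x).hasDerivAt.div ((hda x).hasDerivAt.const_mul 2) (by positivity))
  have hsqrt0 : √(a x) ≠ 0 := (Real.sqrt_pos.2 hax).ne'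
  have hlog : deriv a x / (2 * √(a x)) / √(a x) = deriv a x / (2 * a x) := by
    rw [div_div, mul_assoc, Real.mul_self_sqrt hax.le]
  have hDdet : IsUnit (!![(√(a x))⁻¹, 0; 0, √(a x)]).det := by simp [hsqrt0]
  rw [hh, gaugeTransform_mul A (differentiableAt_lowerUnitriangular_apply hc.differentiableAt)
      (differentiableAt_diagonal_inv_apply hsqrt.differentiableAt hsqrt0) hDdet,
    gaugeTransform_lowerUnitriangular hc, gaugeTransform_diagonal_inv hsqrt hsqrt0, hlog,
    Real.sq_sqrt hax.le, hA, hT]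
  ext i j
  fin_cases i <;> fin_cases j <;> simp [hax.ne']
  field_simp
  ring

/-- The explicit lower-triangular gauge transformation taking the boundary connection
`A = [[s/2, a],[u, -s/2]]` to Drinfeld–Sokolov normal form `[[0,1],[-T,0]]`, where
`T = ½(a''/a - (3/2)(a'/a)²) - au - ¼s² - ½(a'/a)s + ½s'` is the Hill potential. -/
theorem gauge_to_drinfeld_sokolov
    (a s u : ℝ → ℝ)
    (ha : ContDiff ℝ (⊤ : ℕ∞) a) (hs : ContDiff ℝ (⊤ : ℕ∞) s) (hu : ContDiff ℝ (⊤ : ℕ∞) u)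
    (hapos : ∀ x, 0 < a x)
    (A h : ℝ → Matrix (Fin 2) (Fin 2) ℝ)
    (hA : A = fun x => !![s x / 2, a x; u x, -(s x / 2)])
    (hh : h = fun x =>
      !![1, 0; s x / 2 + deriv a x / (2 * a x), 1] *
      !![(Real.sqrt (a x))⁻¹, 0; 0, Real.sqrt (a x)])
    (T : ℝ → ℝ)
    (hT : T = fun x =>
      (1/2) * (deriv (deriv a) x / a x - (3/2) * (deriv a x / a x) ^ 2)
        - a x * u x - (1/4) * (s x) ^ 2 - (1/2) * (deriv a x / a x) * s x
        + (1/2) * deriv s x) :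
    ∀ x, gaugeTransform h A x = !![0, 1; -T x, 0] :=
  gauge_to_drinfeld_sokolov_general a s u ha hs hapos A h hA hh T hT
end

section
/- Let a, s, u : ℝ → ℝ be smooth with a(x) > 0 for all x, and set A(x) = [[s(x)/2, a(x)],[u(x), -s(x)/2]]. Suppose h₁, h₂ : ℝ → SL(2,ℝ) are smooth, pointwise lower triangular with strictly positive diagonal entries, and that for each i = 1,2 the gauge transform hᵢ•A = hᵢAhᵢ⁻¹ - hᵢ'hᵢ⁻¹ has both diagonal entries equal to 0 and upper-right entry equal to 1 at every point. Then h₁ = h₂. -/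
open Matrix

/-!
Write `h = [[p, 0], [q, p⁻¹]]`. The derivative term `h'h⁻¹` is lower triangular, so
`(h•A)₀₁ = p² A₀₁`, and the normal-form condition `(h•A)₀₁ = 1` with `p > 0` determines `p`.
Using `p² A₀₁ = 1` once more, the condition `(h•A)₀₀ = 0` becomes `q = p A₀₀ - p'`, so `q`
is determined by `p` as well.
-/

theorem Matrix.inv_eq_of_det_eq_one_fin_two {R : Type*} [CommRing R]
    (M : Matrix (Fin 2) (Fin 2) R) (hdet : M.det = 1) :
    M⁻¹ = !![M 1 1, -M 0 1; -M 1 0, M 0 0] := by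
  rw [inv_def, hdet, Ring.inverse_one, one_smul, adjugate_fin_two]

theorem Matrix.eq_of_lowerTriangular_of_det_eq_one_fin_two {R : Type*} [CommRing R]
    {M N : Matrix (Fin 2) (Fin 2) R} (hM : M 0 1 = 0) (hN : N 0 1 = 0)
    (hdetM : M.det = 1) (hdetN : N.det = 1) (h₀₀ : M 0 0 = N 0 0) (h₁₀ : M 1 0 = N 1 0) :
    M = N := by
  rw [det_fin_two, hM, zero_mul, sub_zero] at hdetM
  rw [det_fin_two, hN, zero_mul, sub_zero, ← h₀₀] at hdetN
  have h₁₁ : M 1 1 = N 1 1 := by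
    calc M 1 1 = M 1 1 * (M 0 0 * N 1 1) := by rw [hdetN, mul_one]
      _ = N 1 1 * (M 0 0 * M 1 1) := by ring
      _ = N 1 1 := by rw [hdetM, mul_one]
  rw [eta_fin_two M, eta_fin_two N, hM, hN, h₀₀, h₁₀, h₁₁]

section LowerTriangularGauge

variable {h : ℝ → Matrix (Fin 2) (Fin 2) ℝ} (A : ℝ → Matrix (Fin 2) (Fin 2) ℝ) {x : ℝ}

theorem gaugeTransform_apply_zero_one_of_lowerTriangular (hlow : ∀ x, h x 0 1 = 0)
    (hdet : (h x).det = 1) :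
    gaugeTransform h A x 0 1 = h x 0 0 ^ 2 * A x 0 1 := by
  simp only [gaugeTransform, derivM, inv_eq_of_det_eq_one_fin_two _ hdet, Matrix.sub_apply,
    mul_apply, Fin.sum_univ_two, of_apply, cons_val_zero, cons_val_one, hlow, deriv_const']
  ring

theorem gaugeTransform_apply_zero_zero_of_lowerTriangular (hlow : ∀ x, h x 0 1 = 0)
    (hdet : (h x).det = 1) :
    gaugeTransform h A x 0 0 =
      h x 0 0 * (h x 1 1 * A x 0 0 - A x 0 1 * h x 1 0) -
        deriv (fun t => h t 0 0) x * h x 1 1 := by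
  simp only [gaugeTransform, derivM, inv_eq_of_det_eq_one_fin_two _ hdet, Matrix.sub_apply,
    mul_apply, Fin.sum_univ_two, of_apply, cons_val_zero, cons_val_one, hlow, deriv_const']
  ring

theorem apply_one_zero_eq_of_gaugeTransform_normal (hlow : ∀ x, h x 0 1 = 0)
    (hdet : (h x).det = 1) (hds₀₀ : gaugeTransform h A x 0 0 = 0)
    (hds₀₁ : gaugeTransform h A x 0 1 = 1) :
    h x 1 0 = h x 0 0 * A x 0 0 - deriv (fun t => h t 0 0) x := by
  rw [gaugeTransform_apply_zero_zero_of_lowerTriangular A hlow hdet] at hds₀₀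
  rw [gaugeTransform_apply_zero_one_of_lowerTriangular A hlow hdet] at hds₀₁
  rw [det_fin_two, hlow x, zero_mul, sub_zero] at hdet
  linear_combination -h x 0 0 * hds₀₀ - h x 1 0 * hds₀₁ +
    (h x 0 0 * A x 0 0 - deriv (fun t => h t 0 0) x) * hdet

end LowerTriangularGauge

theorem drinfeld_sokolov_gauge_unique_general
    (A : ℝ → Matrix (Fin 2) (Fin 2) ℝ)
    (h₁ h₂ : ℝ → Matrix (Fin 2) (Fin 2) ℝ)
    (hdet₁ : ∀ x, (h₁ x).det = 1) (hdet₂ : ∀ x, (h₂ x).det = 1)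
    (hlow₁ : ∀ x, h₁ x 0 1 = 0) (hlow₂ : ∀ x, h₂ x 0 1 = 0)
    (hpos₁ : ∀ x, 0 < h₁ x 0 0 ∧ 0 < h₁ x 1 1)
    (hpos₂ : ∀ x, 0 < h₂ x 0 0 ∧ 0 < h₂ x 1 1)
    (hds₁ : ∀ x, gaugeTransform h₁ A x 0 0 = 0 ∧ gaugeTransform h₁ A x 1 1 = 0 ∧
      gaugeTransform h₁ A x 0 1 = 1)
    (hds₂ : ∀ x, gaugeTransform h₂ A x 0 0 = 0 ∧ gaugeTransform h₂ A x 1 1 = 0 ∧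
      gaugeTransform h₂ A x 0 1 = 1) :
    h₁ = h₂ := by
  have hsq₁ x : h₁ x 0 0 ^ 2 * A x 0 1 = 1 := by
    rw [← gaugeTransform_apply_zero_one_of_lowerTriangular A hlow₁ (hdet₁ x), (hds₁ x).2.2]
  have hsq₂ x : h₂ x 0 0 ^ 2 * A x 0 1 = 1 := by
    rw [← gaugeTransform_apply_zero_one_of_lowerTriangular A hlow₂ (hdet₂ x), (hds₂ x).2.2]
  have h₀₀ : (fun x => h₁ x 0 0) = fun x => h₂ x 0 0 := funext fun x =>
    (sq_eq_sq₀ (hpos₁ x).1.le (hpos₂ x).1.le).1 <|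
      mul_right_cancel₀ (right_ne_zero_of_mul_eq_one (hsq₁ x)) ((hsq₁ x).trans (hsq₂ x).symm)
  funext x
  refine Matrix.eq_of_lowerTriangular_of_det_eq_one_fin_two (hlow₁ x) (hlow₂ x) (hdet₁ x)
    (hdet₂ x) (congrFun h₀₀ x) ?_
  rw [apply_one_zero_eq_of_gaugeTransform_normal A hlow₁ (hdet₁ x) (hds₁ x).1 (hds₁ x).2.2,
    apply_one_zero_eq_of_gaugeTransform_normal A hlow₂ (hdet₂ x) (hds₂ x).1 (hds₂ x).2.2,
    h₀₀, congrFun h₀₀ x]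

/-- Freeness of the gauge action of `B⁻`-valued functions: a smooth lower-triangular
`SL(2,ℝ)`-valued gauge transformation with positive diagonal taking a positive connection
`A = [[s/2, a],[u, -s/2]]` to Drinfeld–Sokolov normal form (zero diagonal, upper-right
entry 1) is unique. -/
theorem drinfeld_sokolov_gauge_unique
    (a s u : ℝ → ℝ)
    (ha : ContDiff ℝ (⊤ : ℕ∞) a) (hs : ContDiff ℝ (⊤ : ℕ∞) s) (hu : ContDiff ℝ (⊤ : ℕ∞) u)
    (hapos : ∀ x, 0 < a x)
    (A : ℝ → Matrix (Fin 2) (Fin 2) ℝ)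
    (hA : A = fun x => !![s x / 2, a x; u x, -(s x / 2)])
    (h₁ h₂ : ℝ → Matrix (Fin 2) (Fin 2) ℝ)
    (hsmooth₁ : ∀ i j, ContDiff ℝ (⊤ : ℕ∞) fun x => h₁ x i j)
    (hsmooth₂ : ∀ i j, ContDiff ℝ (⊤ : ℕ∞) fun x => h₂ x i j)
    (hdet₁ : ∀ x, (h₁ x).det = 1) (hdet₂ : ∀ x, (h₂ x).det = 1)
    (hlow₁ : ∀ x, h₁ x 0 1 = 0) (hlow₂ : ∀ x, h₂ x 0 1 = 0)
    (hpos₁ : ∀ x, 0 < h₁ x 0 0 ∧ 0 < h₁ x 1 1)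
    (hpos₂ : ∀ x, 0 < h₂ x 0 0 ∧ 0 < h₂ x 1 1)
    (hds₁ : ∀ x, gaugeTransform h₁ A x 0 0 = 0 ∧ gaugeTransform h₁ A x 1 1 = 0 ∧
      gaugeTransform h₁ A x 0 1 = 1)
    (hds₂ : ∀ x, gaugeTransform h₂ A x 0 0 = 0 ∧ gaugeTransform h₂ A x 1 1 = 0 ∧
      gaugeTransform h₂ A x 0 1 = 1) :
    h₁ = h₂ :=
  drinfeld_sokolov_gauge_unique_general A h₁ h₂ hdet₁ hdet₂ hlow₁ hlow₂ hpos₁ hpos₂ hds₁ hds₂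
end

section
/- Let f, g : ℝ × ℝ → ℝ be smooth functions such that g(x,0) = 0, ∂ᵧg(x,0) > 0, and ∂ₓf(x,0) > 0 for all x. For (x,y) with (∂ₓf(x,y))² + (∂ₓg(x,y))² ≠ 0, define k(x,y) = ∂ₓf / ((∂ₓf)² + (∂ₓg)²)^(1/2) + g·(∂ₓf·∂ₓ∂ₓg - ∂ₓ∂ₓf·∂ₓg) / ((∂ₓf)² + (∂ₓg)²)^(3/2), all partial derivatives evaluated at (x,y). Then for each x, the limit of (k(x,y) - 1)/y² as y → 0 exists and equals c(x) = g₁(x)·g₁''(x)/f₀'(x)² - g₁(x)·g₁'(x)·f₀''(x)/f₀'(x)³ - ½·g₁'(x)²/f₀'(x)², where f₀(x) = f(x,0) and g₁(x) = ∂ᵧg(x,0). -/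
open Filter

/-!
Fix `x` and follow the vertical line through `(x, 0)`, writing `A = ∂ₓf`, `B = ∂ₓg`,
`N = ∂ₓf ∂ₓ²g - ∂ₓ²f ∂ₓg` and `s = √(A² + B²)`. Since `g` vanishes on the boundary, so do `B`
and `∂ₓ²g`, hence `g`, `B` and `N` all vanish at `y = 0`. From `A/s - 1 = -B²/(s(A + s))`,
`(k - 1)/y² = -(B/y)²/(s(A + s)) + (g/y)(N/y)/s³`,
and each difference quotient tends to a `y`-derivative at the boundary; symmetry of mixed
partials identifies these with `g₁'`, `g₁` and `f₀'g₁'' - f₀''g₁'`.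
-/

open Topology
open scoped ContDiff

section PartialDerivatives

variable {u : ℝ × ℝ → ℝ}

theorem hasDerivAt_pdx {x b : ℝ} (hu : DifferentiableAt ℝ u (x, b)) :
    HasDerivAt (fun t => u (t, b)) (pdx u (x, b)) x :=
  hu.hasFDerivAt.comp_hasDerivAt x ((hasDerivAt_id x).prodMk (hasDerivAt_const x b))

theorem hasDerivAt_pdy {a y : ℝ} (hu : DifferentiableAt ℝ u (a, y)) :
    HasDerivAt (fun s => u (a, s)) (pdy u (a, y)) y :=
  hu.hasFDerivAt.comp_hasDerivAt y ((hasDerivAt_const y a).prodMk (hasDerivAt_id y))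

theorem deriv_horizontal_slice (hu : Differentiable ℝ u) (b : ℝ) :
    deriv (fun t => u (t, b)) = fun t => pdx u (t, b) :=
  funext fun _ => (hasDerivAt_pdx (hu _)).deriv

theorem pdx_eq_zero_of_horizontal_slice_eq_zero {b : ℝ} (hu : Differentiable ℝ u)
    (h : ∀ t, u (t, b) = 0) (t : ℝ) : pdx u (t, b) = 0 := by
  rw [← congrFun (deriv_horizontal_slice hu b) t, funext h, deriv_const]

theorem ContDiff.pdx {m n : WithTop ℕ∞} (hu : ContDiff ℝ n u) (hmn : m + 1 ≤ n) :
    ContDiff ℝ m (pdx u) :=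
  (hu.fderiv_right hmn).clm_apply contDiff_const

theorem ContDiff.pdy {m n : WithTop ℕ∞} (hu : ContDiff ℝ n u) (hmn : m + 1 ≤ n) :
    ContDiff ℝ m (pdy u) :=
  (hu.fderiv_right hmn).clm_apply contDiff_const

theorem pdy_pdx_apply {z : ℝ × ℝ} (hu : ContDiffAt ℝ 2 u z) :
    pdy (pdx u) z = pdx (pdy u) z := by
  have hsymm : IsSymmSndFDerivAt ℝ u z := hu.isSymmSndFDerivAt (by simp)
  have hd : DifferentiableAt ℝ (fderiv ℝ u) z :=
    (hu.fderiv_right (m := 1) le_rfl).differentiableAt one_ne_zero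
  have key : ∀ v w : ℝ × ℝ, fderiv ℝ (fun p => fderiv ℝ u p v) z w
      = fderiv ℝ (fderiv ℝ u) z w v := fun v w => by
    rw [(hd.hasFDerivAt.clm_apply (hasFDerivAt_const v z)).fderiv]
    simp
  exact (key _ _).trans ((hsymm _ _).trans (key _ _).symm)

theorem pdy_pdx (hu : ContDiff ℝ 2 u) : pdy (pdx u) = pdx (pdy u) :=
  funext fun _ => pdy_pdx_apply hu.contDiffAt

theorem hasDerivAt_pdx_vertical {a y : ℝ} (hu : ContDiffAt ℝ 2 u (a, y)) :
    HasDerivAt (fun s => pdx u (a, s)) (pdx (pdy u) (a, y)) y := by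
  rw [← pdy_pdx_apply hu]
  exact hasDerivAt_pdy
    (((hu.fderiv_right (m := 1) le_rfl).clm_apply contDiffAt_const).differentiableAt one_ne_zero)

end PartialDerivatives

theorem HasDerivAt.tendsto_div_nhdsNE_zero {u : ℝ → ℝ} {d : ℝ} (h : HasDerivAt u d 0)
    (h0 : u 0 = 0) : Tendsto (fun y => u y / y) (𝓝[≠] 0) (𝓝 d) := by
  simpa [h0, div_eq_inv_mul] using h.tendsto_slope_zero

theorem div_sqrt_sq_add_sq_sub_one {A B : ℝ} (hA : 0 < A) :
    A / √(A ^ 2 + B ^ 2) - 1 = -B ^ 2 / (√(A ^ 2 + B ^ 2) * (A + √(A ^ 2 + B ^ 2))) := by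
  have hs : 0 < √(A ^ 2 + B ^ 2) := Real.sqrt_pos.mpr (by positivity)
  field_simp
  linear_combination -Real.sq_sqrt (by positivity : 0 ≤ A ^ 2 + B ^ 2)

theorem tendsto_curvature_defect {A B G N : ℝ → ℝ} {b' g' n' : ℝ}
    (hA : ContinuousAt A 0) (hA0 : 0 < A 0)
    (hB : HasDerivAt B b' 0) (hB0 : B 0 = 0) (hG : HasDerivAt G g' 0) (hG0 : G 0 = 0)
    (hN : HasDerivAt N n' 0) (hN0 : N 0 = 0) :
    Tendsto (fun y => (A y / (A y ^ 2 + B y ^ 2) ^ ((1 : ℝ) / 2)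
        + G y * N y / (A y ^ 2 + B y ^ 2) ^ ((3 : ℝ) / 2) - 1) / y ^ 2)
      (𝓝[≠] 0) (𝓝 (-b' ^ 2 / (2 * A 0 ^ 2) + g' * n' / A 0 ^ 3)) := by
  set a := A 0
  have hA' : Tendsto A (𝓝[≠] 0) (𝓝 a) := hA.tendsto.mono_left nhdsWithin_le_nhds
  have hS : Tendsto (fun y => √(A y ^ 2 + B y ^ 2)) (𝓝[≠] 0) (𝓝 a) := by
    have hB' := hB.continuousAt.tendsto.mono_left (nhdsWithin_le_nhds (s := {0}ᶜ))
    simpa [hB0, Real.sqrt_sq hA0.le] using ((hA'.pow 2).add (hB'.pow 2)).sqrt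
  have hlim : Tendsto (fun y => -(B y / y) ^ 2 / (√(A y ^ 2 + B y ^ 2) *
        (A y + √(A y ^ 2 + B y ^ 2))) + G y / y * (N y / y) / √(A y ^ 2 + B y ^ 2) ^ 3)
      (𝓝[≠] 0) (𝓝 (-b' ^ 2 / (a * (a + a)) + g' * n' / a ^ 3)) :=
    (((hB.tendsto_div_nhdsNE_zero hB0).pow 2).neg.div (hS.mul (hA'.add hS)) (by positivity)).add
      (((hG.tendsto_div_nhdsNE_zero hG0).mul (hN.tendsto_div_nhdsNE_zero hN0)).div (hS.pow 3)
        (by positivity))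
  convert hlim.congr' ?_ using 2
  · field_simp
    ring
  filter_upwards [hA'.eventually (eventually_gt_nhds hA0), self_mem_nhdsWithin] with y hAy hy
  have hD : 0 ≤ A y ^ 2 + B y ^ 2 := by positivity
  rw [Real.rpow_div_two_eq_sqrt _ hD, Real.rpow_div_two_eq_sqrt _ hD, Real.rpow_one,
    Real.rpow_ofNat, add_sub_right_comm, div_sqrt_sq_add_sq_sub_one hAy]
  field_simp

theorem geodesic_curvature_limit_general
    (f g : ℝ × ℝ → ℝ) (hf : ContDiff ℝ (⊤ : ℕ∞) f) (hg : ContDiff ℝ (⊤ : ℕ∞) g)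
    (hg0 : ∀ x : ℝ, g (x, 0) = 0)
    (hf0pos : ∀ x : ℝ, 0 < pdx f (x, 0))
    (k : ℝ × ℝ → ℝ)
    (hk : k = fun z =>
      pdx f z / ((pdx f z) ^ 2 + (pdx g z) ^ 2) ^ ((1 : ℝ)/2) +
      g z * (pdx f z * pdx (pdx g) z - pdx (pdx f) z * pdx g z) /
        ((pdx f z) ^ 2 + (pdx g z) ^ 2) ^ ((3 : ℝ)/2))
    (f₀ g₁ : ℝ → ℝ)
    (hf₀ : f₀ = fun x => f (x, 0))
    (hg₁ : g₁ = fun x => pdy g (x, 0))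
    (c : ℝ → ℝ)
    (hc : c = fun x =>
      g₁ x * deriv (deriv g₁) x / (deriv f₀ x) ^ 2
        - g₁ x * deriv g₁ x * deriv (deriv f₀) x / (deriv f₀ x) ^ 3
        - (1/2) * (deriv g₁ x) ^ 2 / (deriv f₀ x) ^ 2) :
    ∀ x : ℝ, Tendsto (fun y : ℝ => (k (x, y) - 1) / y ^ 2)
      (nhdsWithin 0 {y : ℝ | y ≠ 0}) (nhds (c x)) := by
  intro x
  subst hk hf₀ hg₁ hc
  have smooth_pdx {u : ℝ × ℝ → ℝ} (hu : ContDiff ℝ ∞ u) : ContDiff ℝ ∞ (pdx u) :=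
    hu.pdx ENat.coe_top_add_one.le
  have smooth_pdy {u : ℝ × ℝ → ℝ} (hu : ContDiff ℝ ∞ u) : ContDiff ℝ ∞ (pdy u) :=
    hu.pdy ENat.coe_top_add_one.le
  have diff {u : ℝ × ℝ → ℝ} (hu : ContDiff ℝ ∞ u) : Differentiable ℝ u :=
    hu.differentiable (by simp)
  have two {u : ℝ × ℝ → ℝ} (hu : ContDiff ℝ ∞ u) : ContDiff ℝ 2 u :=
    hu.of_le (WithTop.coe_le_coe.mpr le_top)
  have hgx0 := pdx_eq_zero_of_horizontal_slice_eq_zero (diff hg) hg0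
  have hgxx0 := pdx_eq_zero_of_horizontal_slice_eq_zero (diff (smooth_pdx hg)) hgx0
  have hB := hasDerivAt_pdx_vertical ((two hg).contDiffAt (x := (x, 0)))
  have hP := hasDerivAt_pdx_vertical ((two (smooth_pdx hg)).contDiffAt (x := (x, 0)))
  rw [pdy_pdx (two hg)] at hP
  have hN := ((hasDerivAt_pdy (diff (smooth_pdx hf) (x, 0))).mul hP).sub
    ((hasDerivAt_pdy (diff (smooth_pdx (smooth_pdx hf)) (x, 0))).mul hB)
  have hlim := tendsto_curvature_defect
    ((smooth_pdx hf).continuous.comp (Continuous.prodMk_right x)).continuousAt (hf0pos x)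
    hB (hgx0 x) (hasDerivAt_pdy (diff hg (x, 0))) (hg0 x) hN (by simp [hgx0, hgxx0])
  refine hlim.mono_right (le_of_eq (congrArg nhds ?_))
  simp only [deriv_horizontal_slice (diff hf), deriv_horizontal_slice (diff (smooth_pdx hf)),
    deriv_horizontal_slice (diff (smooth_pdy hg)),
    deriv_horizontal_slice (diff (smooth_pdx (smooth_pdy hg))), hgx0, hgxx0, Function.comp_apply]
  field_simp [(hf0pos x).ne']
  ring

/-- The geodesic curvature of horizontal curves near the ideal boundary: for a local
isometry `(f,g)` to the upper half-plane model, with `k(x,y)` the geodesic curvature of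
`t ↦ (f(x+t,y), g(x+t,y))`, the limit of `(k(x,y) - 1)/y²` as `y → 0` exists and equals
`c(x) = g₁g₁''/f₀'² - g₁g₁'f₀''/f₀'³ - ½g₁'²/f₀'²`, where `f₀(x) = f(x,0)` and
`g₁(x) = ∂ᵧg(x,0)`. -/
theorem geodesic_curvature_limit
    (f g : ℝ × ℝ → ℝ) (hf : ContDiff ℝ (⊤ : ℕ∞) f) (hg : ContDiff ℝ (⊤ : ℕ∞) g)
    (hg0 : ∀ x : ℝ, g (x, 0) = 0)
    (hg1pos : ∀ x : ℝ, 0 < pdy g (x, 0))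
    (hf0pos : ∀ x : ℝ, 0 < pdx f (x, 0))
    (k : ℝ × ℝ → ℝ)
    (hk : k = fun z =>
      pdx f z / ((pdx f z) ^ 2 + (pdx g z) ^ 2) ^ ((1 : ℝ)/2) +
      g z * (pdx f z * pdx (pdx g) z - pdx (pdx f) z * pdx g z) /
        ((pdx f z) ^ 2 + (pdx g z) ^ 2) ^ ((3 : ℝ)/2))
    (f₀ g₁ : ℝ → ℝ)
    (hf₀ : f₀ = fun x => f (x, 0))
    (hg₁ : g₁ = fun x => pdy g (x, 0))
    (c : ℝ → ℝ)
    (hc : c = fun x =>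
      g₁ x * deriv (deriv g₁) x / (deriv f₀ x) ^ 2
        - g₁ x * deriv g₁ x * deriv (deriv f₀) x / (deriv f₀ x) ^ 3
        - (1/2) * (deriv g₁ x) ^ 2 / (deriv f₀ x) ^ 2) :
    ∀ x : ℝ, Tendsto (fun y : ℝ => (k (x, y) - 1) / y ^ 2)
      (nhdsWithin 0 {y : ℝ | y ≠ 0}) (nhds (c x)) :=
  geodesic_curvature_limit_general f g hf hg hg0 hf0pos k hk f₀ g₁ hf₀ hg₁ c hc
end

section
/- Let f₀, g₁ : ℝ → ℝ be smooth with f₀'(x) > 0 and g₁(x) > 0 for all x. Define a = f₀'/g₁, s = g₁'/g₁, and c = g₁·g₁''/(f₀')² - g₁·g₁'·f₀''/(f₀')³ - ½·(g₁')²/(f₀')². Then a²·c = s' - (a'/a)·s - ½·s², and consequently ½·(a''/a - (3/2)·(a'/a)²) - ¼·s² - ½·(a'/a)·s + ½·s' = ½·(a''/a - (3/2)·(a'/a)²) + ½·a²·c. -/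
/-!
With `a = f₀'/g₁` and `s = g₁'/g₁ = (log g₁)'`, the two log-derivative rules
`a'/a = f₀''/f₀' - s` and `s' = g₁''/g₁ - s²` turn both sides of `a²c = s' - (a'/a)s - ½s²`
into `g₁''/g₁ - (f₀''/f₀')s - ½s²`. The Hill-potential identity is then linear in `a²c`.
-/

theorem deriv_logDeriv {𝕜 : Type*} [NontriviallyNormedField 𝕜] {g : 𝕜 → 𝕜} {x : 𝕜}
    (hg : DifferentiableAt 𝕜 g x) (hg' : DifferentiableAt 𝕜 (deriv g) x) (hx : g x ≠ 0) :
    deriv (logDeriv g) x = deriv (deriv g) x / g x - logDeriv g x ^ 2 := by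
  rw [logDeriv, deriv_div hg' hg hx, Pi.div_apply]
  field_simp

/-- The identity `a²c = s' - (a'/a)s - ½s²` relating the quadratic coefficient `c` of the
geodesic-curvature expansion to `a = f₀'/g₁` and `s = g₁'/g₁`, and the resulting equality
of the two expressions for the Hill potential (Theorem C of the paper). -/
theorem hill_potential_geodesic_curvature_identity
    (f₀ g₁ : ℝ → ℝ) (hf₀ : ContDiff ℝ (⊤ : ℕ∞) f₀) (hg₁ : ContDiff ℝ (⊤ : ℕ∞) g₁)
    (hf₀' : ∀ x, 0 < deriv f₀ x) (hg₁pos : ∀ x, 0 < g₁ x)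
    (a s c : ℝ → ℝ)
    (ha : a = fun x => deriv f₀ x / g₁ x)
    (hs : s = fun x => deriv g₁ x / g₁ x)
    (hc : c = fun x =>
      g₁ x * deriv (deriv g₁) x / (deriv f₀ x) ^ 2
        - g₁ x * deriv g₁ x * deriv (deriv f₀) x / (deriv f₀ x) ^ 3
        - (1/2) * (deriv g₁ x) ^ 2 / (deriv f₀ x) ^ 2) :
    ∀ x, (a x) ^ 2 * c x = deriv s x - (deriv a x / a x) * s x - (1/2) * (s x) ^ 2 ∧
      (1/2) * (deriv (deriv a) x / a x - (3/2) * (deriv a x / a x) ^ 2)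
          - (1/4) * (s x) ^ 2 - (1/2) * (deriv a x / a x) * s x + (1/2) * deriv s x
        = (1/2) * (deriv (deriv a) x / a x - (3/2) * (deriv a x / a x) ^ 2)
          + (1/2) * (a x) ^ 2 * c x := by
  intro x
  have h2 : (2 : WithTop ℕ∞) ≤ (⊤ : ℕ∞) := WithTop.coe_le_coe.mpr le_top
  have hf₀₂ := hf₀.of_le h2
  have hg₁₂ := hg₁.of_le h2
  have hg₁x : g₁ x ≠ 0 := (hg₁pos x).ne'
  have hf₀x : deriv f₀ x ≠ 0 := (hf₀' x).ne'
  have hs_log : s = logDeriv g₁ := hs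
  have hds : deriv s x = deriv (deriv g₁) x / g₁ x - s x ^ 2 := by
    rw [hs_log]
    exact deriv_logDeriv (hg₁₂.differentiable two_ne_zero x)
      (hg₁₂.differentiable_deriv_two x) hg₁x
  have hda : deriv a x / a x = deriv (deriv f₀) x / deriv f₀ x - s x := by
    rw [← logDeriv_apply, ha, logDeriv_div x hf₀x hg₁x (hf₀₂.differentiable_deriv_two x)
      (hg₁₂.differentiable two_ne_zero x), hs_log, logDeriv_apply, logDeriv_apply]
  have hcurv : a x ^ 2 * c x = deriv s x - deriv a x / a x * s x - 1/2 * s x ^ 2 := by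
    rw [hds, hda, ha, hs, hc]
    field_simp
    ring
  exact ⟨hcurv, by linarith⟩
end

section
/- Let ℓ > 0, τ ∈ ℝ, and let f : ℝ → ℝ be smooth. On ℝ² with coordinates (x,u), define the 2×2-matrix-valued functions A₁(x,u) = ½·[[0, eᵘ·ℓ],[e⁻ᵘ·ℓ, 0]] and A₂(x,u) = ½·[[-1, eᵘ·τ·f'(u)],[e⁻ᵘ·τ·f'(u), 1]]. Then (A₁,A₂) satisfies the zero-curvature equation: ∂ₓA₂ - ∂ᵤA₁ + A₁A₂ - A₂A₁ = 0. -/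
open Matrix Real

/-- Partial derivative in the second (`u`) direction of a function on `ℝ²`. -/
noncomputable def pdu (f : ℝ × ℝ → ℝ) (z : ℝ × ℝ) : ℝ := fderiv ℝ f z (0, 1)

/-- Entrywise partial derivative in the second direction of a matrix-valued function. -/
noncomputable def pduM (A : ℝ × ℝ → Matrix (Fin 2) (Fin 2) ℝ) (z : ℝ × ℝ) :
    Matrix (Fin 2) (Fin 2) ℝ := Matrix.of fun i j => pdu (fun w => A w i j) z

/-!
Both `A₁` and `A₂` depend on `u` only, so `∂ₓA₂ = 0` and `∂ᵤA₁` is `A₁` with its lower-left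
entry negated. The commutator `[A₁, A₂]` is exactly that matrix, because the two off-diagonal
products `eᵘℓ · e⁻ᵘτf'(u)` and `e⁻ᵘℓ · eᵘτf'(u)` agree.
-/

/-- Where `f` is not differentiable this holds because `fderiv` is then the junk value `0`. -/
theorem fderiv_apply_eq_zero_of_forall_add_smul {𝕜 : Type*} [NontriviallyNormedField 𝕜]
    {E : Type*} [NormedAddCommGroup E] [NormedSpace 𝕜 E]
    {F : Type*} [NormedAddCommGroup F] [NormedSpace 𝕜 F] {f : E → F} {x v : E}
    (hf : ∀ t : 𝕜, f (x + t • v) = f x) : fderiv 𝕜 f x v = 0 := by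
  by_cases hdiff : DifferentiableAt 𝕜 f x
  · rw [← hdiff.lineDeriv_eq_fderiv, lineDeriv]
    simp only [hf, deriv_const]
  · simp [fderiv_zero_of_not_differentiableAt hdiff]

theorem pdu_comp_snd {g : ℝ → ℝ} {g' : ℝ} {z : ℝ × ℝ} (hg : HasDerivAt g g' z.2) :
    pdu (fun w => g w.2) z = g' := by
  have hcomp : HasFDerivAt (fun w : ℝ × ℝ => g w.2)
      ((ContinuousLinearMap.smulRight (1 : ℝ →L[ℝ] ℝ) g').comp
        (ContinuousLinearMap.snd ℝ ℝ ℝ)) z :=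
    hg.hasFDerivAt.comp z hasFDerivAt_snd
  simp [pdu, hcomp.fderiv]

theorem pdxM_eq_zero_of_forall_eq {A : ℝ × ℝ → Matrix (Fin 2) (Fin 2) ℝ}
    (hA : ∀ x x' u, A (x, u) = A (x', u)) (z : ℝ × ℝ) : pdxM A z = 0 := by
  obtain ⟨x, u⟩ := z
  ext i j
  refine fderiv_apply_eq_zero_of_forall_add_smul fun t => ?_
  have hshift : (x, u) + t • ((1 : ℝ), (0 : ℝ)) = (x + t, u) := by simp
  rw [hshift, hA]

theorem pduM_comp_snd {M : ℝ → Matrix (Fin 2) (Fin 2) ℝ} {M' : Matrix (Fin 2) (Fin 2) ℝ}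
    {z : ℝ × ℝ} (hM : ∀ i j, HasDerivAt (fun u => M u i j) (M' i j) z.2) :
    pduM (fun w => M w.2) z = M' := by
  ext i j
  exact pdu_comp_snd (hM i j)

theorem hasDerivAt_cylinder_connection_entry (ℓ u : ℝ) (i j : Fin 2) :
    HasDerivAt (fun u => ((1/2 : ℝ) • !![0, exp u * ℓ; exp (-u) * ℓ, 0]) i j)
      (((1/2 : ℝ) • !![0, exp u * ℓ; -(exp (-u) * ℓ), 0]) i j) u := by
  have hexp_neg : HasDerivAt (fun u => exp (-u)) (-exp (-u)) u := by
    simpa using (hasDerivAt_neg u).exp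
  fin_cases i <;> fin_cases j <;> simp only [Matrix.smul_apply, smul_eq_mul]
  · simpa using hasDerivAt_const u (0 : ℝ)
  · simpa using ((hasDerivAt_exp u).mul_const ℓ).const_mul (1/2 : ℝ)
  · simpa using (hexp_neg.mul_const ℓ).const_mul (1/2 : ℝ)
  · simpa using hasDerivAt_const u (0 : ℝ)

theorem commutator_half_smul_of_mul_eq_mul {K : Type*} [Field K] {p q r s : K}
    (h : p * s = q * r) :
    (1/2 : K) • !![0, p; q, 0] * (1/2 : K) • !![-1, r; s, 1]
      - (1/2 : K) • !![-1, r; s, 1] * (1/2 : K) • !![0, p; q, 0]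
      = (1/2 : K) • !![0, p; -q, 0] := by
  ext i j
  fin_cases i <;> fin_cases j <;> simp <;> grind

theorem twisted_cylinder_connection_flat_general
    (ℓ τ : ℝ) (f : ℝ → ℝ)
    (A₁ A₂ : ℝ × ℝ → Matrix (Fin 2) (Fin 2) ℝ)
    (hA₁ : A₁ = fun z => (1/2 : ℝ) •
      !![0, Real.exp z.2 * ℓ; Real.exp (-z.2) * ℓ, 0])
    (hA₂ : A₂ = fun z => (1/2 : ℝ) •
      !![-1, Real.exp z.2 * τ * deriv f z.2;
         Real.exp (-z.2) * τ * deriv f z.2, 1]) :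
    ∀ z : ℝ × ℝ, pdxM A₂ z - pduM A₁ z + A₁ z * A₂ z - A₂ z * A₁ z = 0 := by
  subst hA₁ hA₂
  intro z
  rw [pdxM_eq_zero_of_forall_eq (fun _ _ _ => rfl),
    pduM_comp_snd (hasDerivAt_cylinder_connection_entry ℓ z.2), add_sub_assoc,
    commutator_half_smul_of_mul_eq_mul (by ring)]
  abel

/-- The connection of the hyperbolic cylinder of neck length `ℓ`, twisted by the
Fenchel–Nielsen twist `τ` implemented by the profile function `f`, is flat:
the pair `A₁ = ½[[0, eᵘℓ],[e⁻ᵘℓ, 0]]`, `A₂ = ½[[-1, eᵘτf'(u)],[e⁻ᵘτf'(u), 1]]`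
satisfies the zero-curvature equation. -/
theorem twisted_cylinder_connection_flat
    (ℓ τ : ℝ) (hℓ : 0 < ℓ) (f : ℝ → ℝ) (hf : ContDiff ℝ (⊤ : ℕ∞) f)
    (A₁ A₂ : ℝ × ℝ → Matrix (Fin 2) (Fin 2) ℝ)
    (hA₁ : A₁ = fun z => (1/2 : ℝ) •
      !![0, Real.exp z.2 * ℓ; Real.exp (-z.2) * ℓ, 0])
    (hA₂ : A₂ = fun z => (1/2 : ℝ) •
      !![-1, Real.exp z.2 * τ * deriv f z.2;
         Real.exp (-z.2) * τ * deriv f z.2, 1]) :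
    ∀ z : ℝ × ℝ, pdxM A₂ z - pduM A₁ z + A₁ z * A₂ z - A₂ z * A₁ z = 0 :=
  twisted_cylinder_connection_flat_general ℓ τ f A₁ A₂ hA₁ hA₂
end
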